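/- For positive integers m ≤ n, ∑_{k=1}^{m} (n−k)!/(m−k)! · ψ₀(k) = n!/((m−1)!(n−m+1)) · [ψ₀(n+1) − ψ₀(n−m+1) + ψ₀(1) − 1/(n−m+1)]. -/

import Mathlib

/-!
Since `ψ₀(k) = ψ₀(1) + H_{k-1}`, with `H` the harmonic numbers, the sum splits into
`ψ₀(1) ∑ (n-k)!/(m-k)!`, a hockey-stick sum, and `∑ (n-k)!/(m-k)! H_{k-1}`. Writing
`d = n - m` and indexing by pairs `i + j = m - 1`, the second sum grows, when `m` increases
by one, by `∑ (d+i)!/(i! (j+1))`; that increment is evaluated by induction on `d`, using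
`(d+i+1)! = ((d+m+1) - (j+1)) (d+i)!`.
-/

open Finset

/-- The `m`-th polygamma function: the `(m+1)`-th derivative of `log ∘ Γ`. -/
noncomputable def psi (m : ℕ) (x : ℝ) : ℝ :=
  iteratedDeriv (m + 1) (fun y => Real.log (Real.Gamma y)) x

open scoped Nat

theorem sum_range_succ_factorial_add_div_factorial (d m : ℕ) :
    ∑ i ∈ range (m + 1), ((d + i)! : ℝ) / i ! = (d + m + 1)! / (m ! * (d + 1)) := by
  induction m with
  | zero => simp [Nat.factorial_succ, Nat.cast_add_one_ne_zero]
  | succ m ih =>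
    rw [sum_range_succ, ih]
    push_cast [Nat.factorial_succ, ← add_assoc]
    field_simp
    ring

theorem sum_antidiagonal_factorial_add_div_factorial_div_succ (d m : ℕ) :
    ∑ p ∈ antidiagonal m, ((d + p.1)! : ℝ) / (p.1 ! * (p.2 + 1)) =
      (d + m + 1)! / (m + 1)! * (harmonic (d + m + 1) - harmonic d) := by
  induction d with
  | zero =>
    have hterm (i : ℕ) : (i ! : ℝ) / i ! = 1 := div_self (by positivity)
    simp_rw [zero_add, ← div_div, hterm]
    rw [← Nat.sum_antidiagonal_swap]
    simp [Nat.sum_antidiagonal_eq_sum_range_succ_mk, harmonic]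
  | succ d ih =>
    have hstep : ∑ p ∈ antidiagonal m, ((d + 1 + p.1)! : ℝ) / (p.1 ! * (p.2 + 1)) =
        (d + m + 2) * ∑ p ∈ antidiagonal m, ((d + p.1)! : ℝ) / (p.1 ! * (p.2 + 1)) -
          ∑ i ∈ range (m + 1), ((d + i)! : ℝ) / i ! := by
      rw [← Nat.sum_antidiagonal_eq_sum_range_succ (fun i _ => ((d + i)! : ℝ) / i !), mul_sum,
        ← sum_sub_distrib]
      refine sum_congr rfl fun ⟨i, j⟩ hij => ?_
      obtain rfl : i + j = m := HasAntidiagonal.mem_antidiagonal.mp hij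
      push_cast [add_right_comm d 1, Nat.factorial_succ]
      field_simp
      ring
    rw [hstep, ih, sum_range_succ_factorial_add_div_factorial,
      show d + 1 + m + 1 = d + m + 1 + 1 by ring, Nat.factorial_succ (d + m + 1),
      Nat.factorial_succ m, harmonic_succ (d + m + 1), harmonic_succ d]
    push_cast
    field_simp
    ring

theorem sum_antidiagonal_factorial_add_div_factorial_mul_harmonic (d m : ℕ) :
    ∑ p ∈ antidiagonal m, ((d + p.1)! : ℝ) / p.1 ! * harmonic p.2 =
      (d + m + 1)! / (m ! * (d + 1)) * (harmonic (d + m + 1) - harmonic (d + 1)) := by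
  induction m with
  | zero => simp
  | succ m ih =>
    have hstep : ∑ p ∈ antidiagonal (m + 1), ((d + p.1)! : ℝ) / p.1 ! * harmonic p.2 =
        ∑ p ∈ antidiagonal m, ((d + p.1)! : ℝ) / p.1 ! * harmonic p.2 +
          ∑ p ∈ antidiagonal m, ((d + p.1)! : ℝ) / (p.1 ! * (p.2 + 1)) := by
      rw [Nat.sum_antidiagonal_succ', ← sum_add_distrib]
      simp only [harmonic_zero, Rat.cast_zero, mul_zero, zero_add]
      refine sum_congr rfl fun p _ => ?_
      push_cast [harmonic_succ, ← div_div]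
      ring
    rw [hstep, ih, sum_antidiagonal_factorial_add_div_factorial_div_succ,
      show d + (m + 1) + 1 = d + m + 1 + 1 by ring, Nat.factorial_succ (d + m + 1),
      Nat.factorial_succ m, harmonic_succ (d + m + 1), harmonic_succ d]
    push_cast
    field_simp
    ring

theorem differentiableAt_log_Gamma {x : ℝ} (hx : 0 < x) :
    DifferentiableAt ℝ (fun y => Real.log (Real.Gamma y)) x :=
  (Real.differentiableAt_Gamma fun n => (neg_nonpos.2 n.cast_nonneg).trans_lt hx |>.ne').log
    (Real.Gamma_pos_of_pos hx).ne'

theorem psi_zero_add_one {x : ℝ} (hx : 0 < x) : psi 0 (x + 1) = psi 0 x + 1 / x := by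
  have hlog : (fun y => Real.log (Real.Gamma (y + 1))) =ᶠ[nhds x]
      fun y => Real.log y + Real.log (Real.Gamma y) := by
    filter_upwards [eventually_gt_nhds hx] with y hy
    rw [Real.Gamma_add_one hy.ne', Real.log_mul hy.ne' (Real.Gamma_pos_of_pos hy).ne']
  calc psi 0 (x + 1) = deriv (fun y => Real.log (Real.Gamma (y + 1))) x := by
        rw [deriv_comp_add_const (fun y => Real.log (Real.Gamma y)), psi, iteratedDeriv_one]
    _ = deriv (fun y => Real.log y + Real.log (Real.Gamma y)) x := hlog.deriv_eq
    _ = psi 0 x + 1 / x := by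
        rw [deriv_fun_add (Real.differentiableAt_log hx.ne') (differentiableAt_log_Gamma hx),
          Real.deriv_log, psi, iteratedDeriv_one, one_div, add_comm]

theorem psi_zero_nat_add_one (l : ℕ) : psi 0 (l + 1) = psi 0 1 + harmonic l := by
  induction l with
  | zero => simp
  | succ l ih =>
    rw [Nat.cast_succ, psi_zero_add_one (by positivity), ih, harmonic_succ]
    push_cast
    ring

theorem stmt_16 (m n : ℕ) (hm : 0 < m) (hmn : m ≤ n) :
    ∑ k ∈ Icc 1 m, ((Nat.factorial (n - k) : ℝ) / (Nat.factorial (m - k) : ℝ)) * psi 0 (k : ℝ) =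
      (Nat.factorial n : ℝ) / ((Nat.factorial (m - 1) : ℝ) * ((n : ℝ) - m + 1)) *
        (psi 0 ((n : ℝ) + 1) - psi 0 ((n : ℝ) - m + 1) + psi 0 1 - 1 / ((n : ℝ) - m + 1)) := by
  obtain ⟨m, rfl⟩ : ∃ m', m = m' + 1 := ⟨m - 1, by omega⟩
  obtain ⟨d, rfl⟩ : ∃ d, n = d + m + 1 := ⟨n - m - 1, by omega⟩
  have hLHS : ∑ k ∈ Icc 1 (m + 1), ((d + m + 1 - k)! : ℝ) / (m + 1 - k)! * psi 0 k =
      ∑ p ∈ antidiagonal m, ((d + p.1)! : ℝ) / p.1 ! * (psi 0 1 + harmonic p.2) := by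
    rw [Nat.sum_antidiagonal_eq_sum_range_succ
        (fun i j => ((d + i)! : ℝ) / i ! * (psi 0 1 + harmonic j)), ← sum_range_reflect,
      ← Ico_add_one_right_eq_Icc, sum_Ico_eq_sum_range]
    refine sum_congr rfl fun j hj => ?_
    obtain ⟨i, rfl⟩ := Nat.exists_eq_add_of_le (Nat.lt_succ_iff.mp (mem_range.mp hj))
    rw [show d + (j + i) + 1 - (1 + j) = d + i by omega, show j + i + 1 - (1 + j) = i by omega,
      Nat.succ_sub_one, Nat.add_sub_cancel_left, Nat.add_sub_cancel, add_comm 1 j,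
      Nat.cast_succ, psi_zero_nat_add_one]
  have hcast : ((d + m + 1 : ℕ) : ℝ) - ((m + 1 : ℕ) : ℝ) + 1 = d + 1 := by push_cast; ring
  rw [hLHS, hcast, Nat.add_sub_cancel, psi_zero_nat_add_one, psi_zero_nat_add_one]
  simp only [mul_add, sum_add_distrib, ← sum_mul]
  rw [Nat.sum_antidiagonal_eq_sum_range_succ (fun i _ => ((d + i)! : ℝ) / i !),
    sum_range_succ_factorial_add_div_factorial,
    sum_antidiagonal_factorial_add_div_factorial_mul_harmonic, harmonic_succ d]
  push_cast
  field_simp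
  ring
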